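/- The Jones monoid J_n is aperiodic: for every w ∈ J_n there exists a positive integer m such that w^m = w^{m-1}. -/

import Mathlib

namespace Origami

/-- Generators of the origami monoid: a type bit (`true` for α, `false` for β)
and an index in `Fin (n-1)` (so indices `1,…,n-1` are represented by `0,…,n-2`). -/
inductive Gen (n : ℕ) : Type
  | mk (t : Bool) (i : Fin (n - 1))
deriving DecidableEq

/-- Words over the generators. -/
abbrev W (n : ℕ) := FreeMonoid (Gen n)

/-- The word consisting of the single generator of type `t` and index `i`. -/
def go {n : ℕ} (t : Bool) (i : Fin (n - 1)) : W n := FreeMonoid.of (Gen.mk t i)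

/-- `|i - j| = 1`. -/
def adj {n : ℕ} (i j : Fin (n - 1)) : Prop := i.val + 1 = j.val ∨ j.val + 1 = i.val

/-- `|i - j| ≥ 2`. -/
def far {n : ℕ} (i j : Fin (n - 1)) : Prop := i.val + 2 ≤ j.val ∨ j.val + 2 ≤ i.val

/-- The defining relations (1)–(5), (1a), (2a), (3a) of the origami monoid. -/
inductive Rel (n : ℕ) : W n → W n → Prop
  | idem (t : Bool) (i : Fin (n - 1)) : Rel n (go t i * go t i) (go t i)
  | jones (t : Bool) (i j : Fin (n - 1)) (h : adj i j) :
      Rel n (go t i * go t j * go t i) (go t i)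
  | inter (t : Bool) (i j : Fin (n - 1)) (h : i ≠ j) :
      Rel n (go t i * go (!t) j) (go (!t) j * go t i)
  | intra (t : Bool) (i j : Fin (n - 1)) (h : far i j) :
      Rel n (go t i * go t j) (go t j * go t i)
  | idemA (t : Bool) (i : Fin (n - 1)) :
      Rel n (go t i * go (!t) i * (go t i * go (!t) i)) (go t i * go (!t) i)
  | jonesA (t : Bool) (i j : Fin (n - 1)) (h : adj i j) :
      Rel n (go t i * go (!t) i * (go t j * go (!t) j) * (go t i * go (!t) i))
            (go t i * go (!t) i)

/-- The congruence generated by the origami relations. -/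
def oriCon (n : ℕ) : Con (W n) := conGen (Rel n)

/-- The origami monoid `O_n`. -/
abbrev O (n : ℕ) := (oriCon n).Quotient

/-- The image of a generator in `O_n`. -/
def gen {n : ℕ} (t : Bool) (i : Fin (n - 1)) : O n := (oriCon n).mk' (go t i)

/-- The generator `α_i`. -/
def genA {n : ℕ} (i : Fin (n - 1)) : O n := gen true i

/-- The generator `β_i`. -/
def genB {n : ℕ} (i : Fin (n - 1)) : O n := gen false i

end Origami

namespace Jones

/-- Words for the Jones monoid: the generator `h_i` is indexed by `Fin (n-1)`. -/
abbrev JW (n : ℕ) := FreeMonoid (Fin (n - 1))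

/-- The defining relations of the Jones monoid `J_n`. -/
inductive JRel (n : ℕ) : JW n → JW n → Prop
  | idem (i : Fin (n - 1)) : JRel n (FreeMonoid.of i * FreeMonoid.of i) (FreeMonoid.of i)
  | jones (i j : Fin (n - 1)) (h : Origami.adj i j) :
      JRel n (FreeMonoid.of i * FreeMonoid.of j * FreeMonoid.of i) (FreeMonoid.of i)
  | comm (i j : Fin (n - 1)) (h : Origami.far i j) :
      JRel n (FreeMonoid.of i * FreeMonoid.of j) (FreeMonoid.of j * FreeMonoid.of i)

/-- The congruence generated by the Jones relations. -/
def jCon (n : ℕ) : Con (JW n) := conGen (JRel n)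

/-- The Jones monoid `J_n`. -/
abbrev J (n : ℕ) := (jCon n).Quotient

/-- The generator `h_i` of the Jones monoid. -/
def h {n : ℕ} (i : Fin (n - 1)) : J n := (jCon n).mk' (FreeMonoid.of i)

end Jones

/-!
Let `S K = below n K` be the submonoid generated by the `h i` with `i < K`. The generator `h K`
commutes with `S (K - 1)` and absorbs its neighbour: `h K * h (K - 1) * h K = h K`. By induction
on `K`, every element of `S (K + 1)` lies in `S K` or is `u * h K * v` with `u v ∈ S K`, and
consequently `h K * x * h K = w * h K` with `w ∈ S K` for all `x ∈ S K`. Taking the `w` with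
`h K * (v * u) * h K = w * h K`, one gets `(u * h K * v) ^ (m + 1) = u * w ^ m * h K * v`, so
aperiodicity passes from `S K` to `S (K + 1)`.
-/

namespace Jones

variable {n : ℕ}

theorem mk'_eq_of_jRel {x y : JW n} (hxy : JRel n x y) : (jCon n).mk' x = (jCon n).mk' y :=
  (Con.eq _).mpr (ConGen.Rel.of _ _ hxy)

theorem h_mul_self (i : Fin (n - 1)) : h i * h i = h i := by
  simpa only [h, map_mul] using mk'_eq_of_jRel (JRel.idem i)

theorem h_mul_h_mul_h {i j : Fin (n - 1)} (hij : Origami.adj i j) : h i * h j * h i = h i := by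
  simpa only [h, map_mul] using mk'_eq_of_jRel (JRel.jones i j hij)

theorem commute_h_of_far {i j : Fin (n - 1)} (hij : Origami.far i j) : Commute (h i) (h j) := by
  rw [Commute, SemiconjBy]
  simpa only [h, map_mul] using mk'_eq_of_jRel (JRel.comm i j hij)

def below (n K : ℕ) : Submonoid (J n) :=
  Submonoid.closure (h '' {i | i.val < K})

theorem h_mem_below {K : ℕ} {i : Fin (n - 1)} (hi : i.val < K) : h i ∈ below n K :=
  Submonoid.subset_closure ⟨i, hi, rfl⟩

theorem below_mono : Monotone (below n) := fun _ _ hKL =>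
  Submonoid.closure_mono <| Set.image_mono fun _ hi => lt_of_lt_of_le hi hKL

theorem below_zero : below n 0 = ⊥ := by
  simp [below]

theorem below_eq_top : below n (n - 1) = ⊤ := by
  have hgen : h '' {i : Fin (n - 1) | i.val < n - 1} = (jCon n).mk' '' Set.range FreeMonoid.of := by
    ext x
    simp [h]
  rw [below, hgen, ← MonoidHom.map_mclosure, FreeMonoid.closure_range_of,
    ← MonoidHom.mrange_eq_map, MonoidHom.mrange_eq_top]
  exact Con.mk'_surjective

theorem commute_h_of_mem_below {a : Fin (n - 1)} {x : J n} (hx : x ∈ below n (a.val - 1)) :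
    Commute (h a) x := by
  induction hx using Submonoid.closure_induction with
  | mem _ hy =>
    obtain ⟨i, hi, rfl⟩ := hy
    exact commute_h_of_far (Or.inr (by simp only [Set.mem_ofPred_eq] at hi; omega))
  | one => exact Commute.one_right _
  | mul _ _ _ _ hy hz => exact hy.mul_right hz

def TopGeneratorAtMostOnce (n K : ℕ) : Prop :=
  ∀ x ∈ below n (K + 1), x ∈ below n K ∨
    ∃ a : Fin (n - 1), a.val = K ∧ ∃ u ∈ below n K, ∃ v ∈ below n K, x = u * h a * v

theorem exists_h_mul_mul_h_eq {K : ℕ} (hK : ∀ K' < K, TopGeneratorAtMostOnce n K')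
    {a : Fin (n - 1)} (ha : a.val = K) {x : J n} (hx : x ∈ below n K) :
    ∃ w ∈ below n K, h a * x * h a = w * h a := by
  cases K with
  | zero =>
    rw [below_zero, Submonoid.mem_bot] at hx
    exact ⟨1, one_mem _, by rw [hx, mul_one, one_mul, h_mul_self]⟩
  | succ K =>
    have hcomm {y : J n} (hy : y ∈ below n K) : Commute (h a) y :=
      commute_h_of_mem_below (by rwa [ha])
    rcases hK K K.lt_succ_self x hx with hx' | ⟨b, hb, u, hu, v, hv, rfl⟩
    · exact ⟨x, hx, by rw [(hcomm hx').eq, mul_assoc, h_mul_self]⟩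
    · refine ⟨u * v, below_mono K.le_succ (mul_mem hu hv), ?_⟩
      calc h a * (u * h b * v) * h a = (h a * u) * h b * (v * h a) := by simp only [mul_assoc]
        _ = u * (h a * h b * h a) * v := by
          rw [(hcomm hu).eq, ← (hcomm hv).eq]
          simp only [mul_assoc]
        _ = u * v * h a := by
          rw [h_mul_h_mul_h (Or.inr (by omega)), mul_assoc, (hcomm hv).eq, mul_assoc]

theorem topGeneratorAtMostOnce (K : ℕ) : TopGeneratorAtMostOnce n K := by
  induction K using Nat.strong_induction_on with
  | _ K IH =>
  intro x hx
  induction hx using Submonoid.closure_induction_left with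
  | one => exact Or.inl (one_mem _)
  | mul_left _ hi y _ ih =>
    obtain ⟨i, hi, rfl⟩ := hi
    simp only [Set.mem_ofPred_eq] at hi
    by_cases hiK : i.val < K
    · rcases ih with hy | ⟨a, ha, u, hu, v, hv, rfl⟩
      · exact Or.inl (mul_mem (h_mem_below hiK) hy)
      · exact Or.inr
          ⟨a, ha, h i * u, mul_mem (h_mem_below hiK) hu, v, hv, by simp only [mul_assoc]⟩
    · have hi : i.val = K := by omega
      rcases ih with hy | ⟨a, ha, u, hu, v, hv, rfl⟩
      · exact Or.inr ⟨i, hi, 1, one_mem _, y, hy, by rw [one_mul]⟩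
      · obtain rfl : a = i := Fin.ext (ha.trans hi.symm)
        obtain ⟨w, hw, hsand⟩ := exists_h_mul_mul_h_eq IH ha hu
        exact Or.inr ⟨a, ha, w, hw, v, hv, by rw [← hsand]; simp only [mul_assoc]⟩

theorem pow_succ_eq_of_sandwich {M : Type*} [Monoid M] {a u v w : M}
    (hsand : a * (v * u) * a = w * a) (m : ℕ) : (u * a * v) ^ (m + 1) = u * w ^ m * a * v := by
  induction m with
  | zero => simp
  | succ m ih =>
    calc (u * a * v) ^ (m + 1 + 1) = u * w ^ m * (a * (v * u) * a) * v := by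
          rw [pow_succ, ih]; simp only [mul_assoc]
      _ = u * w ^ (m + 1) * a * v := by rw [hsand, pow_succ]; simp only [mul_assoc]

theorem exists_pow_succ_eq_pow_of_mem_below (K : ℕ) :
    ∀ x ∈ below n K, ∃ m : ℕ, x ^ (m + 1) = x ^ m := by
  induction K with
  | zero =>
    intro x hx
    rw [below_zero, Submonoid.mem_bot] at hx
    exact ⟨0, by rw [hx, one_pow, one_pow]⟩
  | succ K IH =>
    intro x hx
    rcases topGeneratorAtMostOnce K x hx with hx' | ⟨a, ha, u, hu, v, hv, rfl⟩
    · exact IH x hx'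
    · obtain ⟨w, hw, hsand⟩ :=
        exists_h_mul_mul_h_eq (fun K' _ => topGeneratorAtMostOnce K') ha (mul_mem hv hu)
      obtain ⟨p, hp⟩ := IH w hw
      exact ⟨p + 1, by rw [pow_succ_eq_of_sandwich hsand, pow_succ_eq_of_sandwich hsand, hp]⟩

end Jones

open Jones in
/-- The Jones monoid is aperiodic: every `w ∈ J_n` satisfies `w ^ m = w ^ (m-1)`
for some positive `m`. -/
theorem jones_aperiodic (n : ℕ) :
    ∀ w : J n, ∃ m : ℕ, 1 ≤ m ∧ w ^ m = w ^ (m - 1) := by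
  intro w
  obtain ⟨m, hm⟩ :=
    exists_pow_succ_eq_pow_of_mem_below (n - 1) w (below_eq_top ▸ Submonoid.mem_top w)
  exact ⟨m + 1, by omega, by simpa using hm⟩
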